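/- arXiv:1001.4565 — 4 statements merged into one kernel-verified Lean document; each statement's English description precedes it below -/
import Mathlib

section
/- Each operator S_l, for l ∈ L, is an isometry on L²(μ_B). -/
open MeasureTheory Complex Filter Topology

noncomputable section

/-- The complex exponential `e^{2π i t·x}`. -/
def expv {d : ℕ} (t x : Fin d → ℝ) : ℂ :=
  Complex.exp (2 * Real.pi * Complex.I * (∑ i, t i * x i))

/-- The integer matrix `R` viewed as a real matrix. -/
def Rmat {d : ℕ} (R : Matrix (Fin d) (Fin d) ℤ) : Matrix (Fin d) (Fin d) ℝ :=
  R.map Int.cast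

/-- An integer vector viewed as a real vector. -/
def vecR {d : ℕ} (b : Fin d → ℤ) : Fin d → ℝ := fun i => (b i : ℝ)

/-- The affine map `τ_b(x) = R⁻¹ (x + b)`. -/
def tauB {d : ℕ} (R : Matrix (Fin d) (Fin d) ℤ) (b : Fin d → ℤ) (x : Fin d → ℝ) :
    Fin d → ℝ :=
  (Rmat R)⁻¹.mulVec (x + vecR b)

/-- `R` is expansive: all (complex) eigenvalues, i.e. roots of the characteristic
polynomial, have absolute value strictly greater than `1`. -/
def Expansive {d : ℕ} (R : Matrix (Fin d) (Fin d) ℤ) : Prop :=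
  ∀ z : ℂ, (R.map (Int.cast : ℤ → ℂ)).charpoly.IsRoot z → 1 < ‖z‖

/-!
Because `‖e^{2πi l·x}‖ = 1`, the norm of `S_l f` is that of `f ∘ 𝓡`, so it suffices that `𝓡`
preserves `μ`. Each image measure `τ_b μ` is a summand of `N • μ`, hence absolutely continuous
with respect to `μ`; it lives on `τ_b(X)`, where `𝓡` inverts `τ_b`, so `𝓡 ∘ τ_b = id` `μ`-a.e.
Pushing the self-similarity relation forward by `𝓡` then gives `𝓡 μ = (1/N) ∑_b (𝓡 ∘ τ_b) μ = μ`.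
-/

section SelfSimilar

variable {α ι : Type*} [MeasurableSpace α] {μ : Measure α} {B : Finset ι} {τ : ι → α → α}

theorem map_absolutelyContinuous_of_eq_smul_sum_map
    (hμ : μ = (B.card : ENNReal)⁻¹ • ∑ i ∈ B, μ.map (τ i)) {i : ι} (hi : i ∈ B) :
    μ.map (τ i) ≪ μ := by
  intro A hA
  rw [hμ, Measure.smul_apply, Measure.coe_finsetSum, Finset.sum_apply, smul_eq_mul,
    mul_eq_zero, ENNReal.inv_eq_zero, Finset.sum_eq_zero_iff] at hA
  exact hA.resolve_left (ENNReal.natCast_ne_top _) i hi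

theorem measurePreserving_of_eq_smul_sum_map
    (hμ : μ = (B.card : ENNReal)⁻¹ • ∑ i ∈ B, μ.map (τ i)) (hτ : ∀ i ∈ B, Measurable (τ i))
    {T : α → α} (hT : Measurable T) (hTτ : ∀ i ∈ B, T ∘ τ i =ᵐ[μ] id) :
    MeasurePreserving T μ μ := by
  refine ⟨hT, ?_⟩
  rcases B.eq_empty_or_nonempty with rfl | hB
  · simp only [Finset.sum_empty, smul_zero] at hμ
    rw [hμ, Measure.map_zero]
  have hcomp : ∀ i ∈ B, (μ.map (τ i)).map T = μ := fun i hi => by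
    rw [Measure.map_map hT (hτ i hi), Measure.map_congr (hTτ i hi), Measure.map_id]
  calc μ.map T = (B.card : ENNReal)⁻¹ • ∑ i ∈ B, (μ.map (τ i)).map T := by
        conv_lhs => rw [hμ]
        rw [Measure.map_smul, Measure.map_finset_sum hT.aemeasurable]
    _ = μ := by
        rw [Finset.sum_congr rfl hcomp, Finset.sum_const, ← Nat.cast_smul_eq_nsmul ENNReal,
          smul_smul, ENNReal.inv_mul_cancel (by simp [hB.ne_empty]) (ENNReal.natCast_ne_top _),
          one_smul]

end SelfSimilar

theorem comp_ae_eq_id_of_ae_eq_leftInverse {α : Type*} [MeasurableSpace α] {μ : Measure α}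
    {X : Set α} {τ g T : α → α} (hg : Function.LeftInverse g τ) (hτ : AEMeasurable τ μ)
    (hac : μ.map τ ≪ μ) (hX : μ Xᶜ = 0) (hT : T =ᵐ[μ.restrict (τ '' X)] g) :
    T ∘ τ =ᵐ[μ] id := by
  have hT' : ∀ᵐ x ∂μ, τ x ∈ τ '' X → T (τ x) = g (τ x) :=
    ae_of_ae_map hτ (hac.ae_le (ae_imp_of_ae_restrict hT))
  filter_upwards [hT', measure_eq_zero_iff_ae_notMem.mp hX] with x hx hxX
  simpa [hg x] using hx (Set.mem_image_of_mem τ (by simpa using hxX))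

theorem Expansive.det_rmat_ne_zero {d : ℕ} {R : Matrix (Fin d) (Fin d) ℤ} (hR : Expansive R) :
    (Rmat R).det ≠ 0 := by
  have hC : (R.map (Int.cast : ℤ → ℂ)).det ≠ 0 := by
    intro h0
    have hroot : (R.map (Int.cast : ℤ → ℂ)).charpoly.IsRoot 0 := by
      rw [← Matrix.mem_spectrum_iff_isRoot_charpoly, spectrum.zero_mem_iff,
        Matrix.isUnit_iff_isUnit_det, h0]
      exact not_isUnit_zero
    have h1 := hR 0 hroot
    norm_num at h1
  rw [← Int.cast_det, Int.cast_ne_zero] at hC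
  rwa [Rmat, ← Int.cast_det, Int.cast_ne_zero]

theorem leftInverse_tauB {d : ℕ} {R : Matrix (Fin d) (Fin d) ℤ} (hR : (Rmat R).det ≠ 0)
    (b : Fin d → ℤ) : Function.LeftInverse (fun y => (Rmat R).mulVec y - vecR b) (tauB R b) := by
  intro x
  simp [tauB, Matrix.mulVec_mulVec, Matrix.mul_nonsing_inv _ (isUnit_iff_ne_zero.mpr hR)]

theorem continuous_tauB {d : ℕ} (R : Matrix (Fin d) (Fin d) ℤ) (b : Fin d → ℤ) :
    Continuous (tauB R b) :=
  (Matrix.mulVecLin (Rmat R)⁻¹).continuous_of_finiteDimensional.comp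
    (continuous_id.add continuous_const)

theorem norm_expv {d : ℕ} (t x : Fin d → ℝ) : ‖expv t x‖ = 1 := by
  rw [expv, Complex.norm_exp]
  simp

theorem eLpNorm_mul_comp_measurePreserving {α 𝕜 : Type*} [MeasurableSpace α]
    [NormedDivisionRing 𝕜] {μ : Measure α} {T : α → α} (hT : MeasurePreserving T μ μ)
    {φ f : α → 𝕜} (hφ : ∀ x, ‖φ x‖ = 1) (hf : AEStronglyMeasurable f μ) (p : ENNReal) :
    eLpNorm (fun x => φ x * f (T x)) p μ = eLpNorm f p μ := by
  rw [← eLpNorm_comp_measurePreserving hf hT]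
  exact eLpNorm_congr_norm_ae (ae_of_all _ fun x => by simp [hφ])

theorem stmt0_general
    (d N : ℕ) (R : Matrix (Fin d) (Fin d) ℤ) (hRexp : Expansive R)
    (B : Finset (Fin d → ℤ)) (hBcard : B.card = N)
    (X : Set (Fin d → ℝ))
    (μ : Measure (Fin d → ℝ))
    (hμinv : μ = (N : ENNReal)⁻¹ • ∑ b ∈ B, μ.map (tauB R b))
    (hμsupp : μ Xᶜ = 0)
    (𝓡 : (Fin d → ℝ) → (Fin d → ℝ)) (h𝓡meas : Measurable 𝓡)
    (h𝓡 : ∀ b ∈ B, ∀ᵐ x ∂(μ.restrict (tauB R b '' X)),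
      𝓡 x = (Rmat R).mulVec x - vecR b)
    (L : Finset (Fin d → ℤ))
    (S : (Fin d → ℤ) → (Lp ℂ 2 μ →L[ℂ] Lp ℂ 2 μ))
    (hS : ∀ l ∈ L, ∀ f : Lp ℂ 2 μ,
      (S l f : (Fin d → ℝ) → ℂ) =ᵐ[μ] fun x => expv (vecR l) x * f (𝓡 x)) :
    ∀ l ∈ L, ∀ f : Lp ℂ 2 μ, ‖S l f‖ = ‖f‖ := by
  subst hBcard
  have hτ b : Measurable (tauB R b) := (continuous_tauB R b).measurable
  have h𝓡τ : ∀ b ∈ B, 𝓡 ∘ tauB R b =ᵐ[μ] id := fun b hb =>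
    comp_ae_eq_id_of_ae_eq_leftInverse (leftInverse_tauB hRexp.det_rmat_ne_zero b)
      (hτ b).aemeasurable (map_absolutelyContinuous_of_eq_smul_sum_map hμinv hb) hμsupp (h𝓡 b hb)
  have h𝓡μ : MeasurePreserving 𝓡 μ μ :=
    measurePreserving_of_eq_smul_sum_map hμinv (fun b _ => hτ b) h𝓡meas h𝓡τ
  intro l hl f
  rw [Lp.norm_def, Lp.norm_def, eLpNorm_congr_ae (hS l hl f),
    eLpNorm_mul_comp_measurePreserving h𝓡μ (norm_expv _) (Lp.aestronglyMeasurable f)]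

theorem stmt0
    (d N : ℕ) (R : Matrix (Fin d) (Fin d) ℤ) (hRexp : Expansive R)
    (B : Finset (Fin d → ℤ)) (hB0 : (0 : Fin d → ℤ) ∈ B) (hBcard : B.card = N)
    (X : Set (Fin d → ℝ)) (hXc : IsCompact X) (hXne : X.Nonempty)
    (hX : X = ⋃ b ∈ B, tauB R b '' X)
    (μ : Measure (Fin d → ℝ)) [IsProbabilityMeasure μ]
    (hμinv : μ = (N : ENNReal)⁻¹ • ∑ b ∈ B, μ.map (tauB R b))
    (hμsupp : μ Xᶜ = 0)
    (hnooverlap : ∀ b ∈ B, ∀ b' ∈ B, b ≠ b' →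
      μ (tauB R b '' X ∩ tauB R b' '' X) = 0)
    (𝓡 : (Fin d → ℝ) → (Fin d → ℝ)) (h𝓡meas : Measurable 𝓡)
    (h𝓡 : ∀ b ∈ B, ∀ᵐ x ∂(μ.restrict (tauB R b '' X)),
      𝓡 x = (Rmat R).mulVec x - vecR b)
    (L : Finset (Fin d → ℤ)) (hL0 : (0 : Fin d → ℤ) ∈ L) (hLcard : L.card = N)
    (S : (Fin d → ℤ) → (Lp ℂ 2 μ →L[ℂ] Lp ℂ 2 μ))
    (hS : ∀ l ∈ L, ∀ f : Lp ℂ 2 μ,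
      (S l f : (Fin d → ℝ) → ℂ) =ᵐ[μ] fun x => expv (vecR l) x * f (𝓡 x)) :
    ∀ l ∈ L, ∀ f : Lp ℂ 2 μ, ‖S l f‖ = ‖f‖ :=
  stmt0_general d N R hRexp B hBcard X μ hμinv hμsupp 𝓡 h𝓡meas h𝓡 L S hS
end
end

section
/- For all l ∈ L and t ∈ ℝ^d, S_l* e_t = χ_B(−τ_l(−t)) · e_{−τ_l(−t)} in L²(μ_B), where τ_l(x) = (R^T)⁻¹(x+l). Consequently, if H is a reducing subspace of L²(μ_B) for the operators (S_l)_{l∈L} with e_t ∈ H and χ_B(−τ_l(−t)) ≠ 0, then e_{−τ_l(−t)} ∈ H. -/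
open MeasureTheory Complex Filter Topology

noncomputable section

/-- The dual map `τ_l(x) = (Rᵀ)⁻¹ (x + l)`. -/
def tauL {d : ℕ} (R : Matrix (Fin d) (Fin d) ℤ) (l : Fin d → ℤ) (x : Fin d → ℝ) :
    Fin d → ℝ :=
  ((Rmat R).transpose)⁻¹.mulVec (x + vecR l)

/-- `χ_B(x) = (1/N) ∑_{b ∈ B} e^{2π i b · x}`. -/
def chiB {d : ℕ} (B : Finset (Fin d → ℤ)) (x : Fin d → ℝ) : ℂ :=
  (B.card : ℂ)⁻¹ * ∑ b ∈ B, expv (vecR b) x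

/-!
Since `𝓡 ∘ τ_b = id` a.e., the invariance of `μ_B` gives
`∫ e_u · (g ∘ 𝓡) dμ_B = (1/N) ∑_b ∫ e_u(τ_b x) g(x) dμ_B`, and `e_u(τ_b x) = e_v(b) e_v(x)` with
`v = (Rᵀ)⁻¹ u`; hence the integral is `χ_B(v) ∫ e_v g dμ_B`. Taking `u = l - t` turns
`⟪e_t, S_l f⟫` into `conj χ_B(-τ_l(-t)) ⟪e_{-τ_l(-t)}, f⟫`, which is the adjoint formula. A reducing
subspace containing `e_t` contains `S_l* e_t`, and dividing by `χ_B(-τ_l(-t)) ≠ 0` gives the rest.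
-/

open Matrix
open scoped ENNReal ComplexConjugate

def IsIFSInvariant {α ι : Type*} [MeasurableSpace α] (μ : Measure α) (B : Finset ι)
    (T : ι → α → α) : Prop :=
  μ = (B.card : ℝ≥0∞)⁻¹ • ∑ b ∈ B, μ.map (T b)

namespace IsIFSInvariant

variable {α ι : Type*} [MeasurableSpace α] {μ : Measure α} {B : Finset ι} {T : ι → α → α}

theorem map_le_card_smul (h : IsIFSInvariant μ B T) {b : ι} (hb : b ∈ B) :
    μ.map (T b) ≤ (B.card : ℝ≥0∞) • μ := by
  have hcard : (B.card : ℝ≥0∞) ≠ 0 := by exact_mod_cast (Finset.card_pos.mpr ⟨b, hb⟩).ne'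
  refine (Finset.single_le_sum (f := fun b => μ.map (T b)) (fun _ _ => Measure.zero_le _)
    hb).trans_eq ?_
  conv_rhs => rw [h]
  rw [smul_smul, ENNReal.mul_inv_cancel hcard (ENNReal.natCast_ne_top _), one_smul]

theorem ae_comp (h : IsIFSInvariant μ B T) {b : ι} (hb : b ∈ B) (hT : Measurable (T b))
    {p : α → Prop} (hp : ∀ᵐ x ∂μ, p x) : ∀ᵐ x ∂μ, p (T b x) :=
  ae_of_ae_map hT.aemeasurable
    (Measure.absolutelyContinuous_of_le_smul (h.map_le_card_smul hb) hp)

theorem integral_eq {E : Type*} [NormedAddCommGroup E] [NormedSpace ℝ E]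
    (h : IsIFSInvariant μ B T) (hT : ∀ b ∈ B, Measurable (T b)) {F : α → E}
    (hF : Integrable F μ) :
    ∫ x, F x ∂μ = (B.card : ℝ)⁻¹ • ∑ b ∈ B, ∫ x, F (T b x) ∂μ := by
  have hFb : ∀ b ∈ B, Integrable F (μ.map (T b)) := fun b hb =>
    (hF.smul_measure (ENNReal.natCast_ne_top _)).mono_measure (h.map_le_card_smul hb)
  conv_lhs => rw [h]
  rw [integral_smul_measure, integral_finsetSum_measure hFb, ENNReal.toReal_inv,
    ENNReal.toReal_natCast]
  congr 1
  exact Finset.sum_congr rfl fun b hb =>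
    integral_map (hT b hb).aemeasurable (hFb b hb).aestronglyMeasurable

end IsIFSInvariant

section Exponentials

variable {d : ℕ}

theorem expv_eq_exp_dotProduct (t x : Fin d → ℝ) :
    expv t x = Complex.exp (2 * Real.pi * I * ((t ⬝ᵥ x : ℝ) : ℂ)) := by
  simp [expv, dotProduct]

theorem expv_add_left (t u x : Fin d → ℝ) : expv (t + u) x = expv t x * expv u x := by
  simp only [expv_eq_exp_dotProduct, add_dotProduct, ofReal_add, mul_add, Complex.exp_add]

theorem expv_add_right (t x y : Fin d → ℝ) : expv t (x + y) = expv t x * expv t y := by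
  simp only [expv_eq_exp_dotProduct, dotProduct_add, ofReal_add, mul_add, Complex.exp_add]

theorem expv_comm (t x : Fin d → ℝ) : expv t x = expv x t := by
  rw [expv_eq_exp_dotProduct, expv_eq_exp_dotProduct, dotProduct_comm]

theorem expv_neg_left (t x : Fin d → ℝ) : expv (-t) x = conj (expv t x) := by
  rw [expv_eq_exp_dotProduct, expv_eq_exp_dotProduct, ← Complex.exp_conj, neg_dotProduct]
  simp only [map_mul, Complex.conj_I, Complex.conj_ofReal, map_ofNat, ofReal_neg]
  ring_nf

theorem expv_neg_right (t x : Fin d → ℝ) : expv t (-x) = conj (expv t x) := by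
  rw [expv_comm, expv_neg_left, expv_comm]

theorem expv_mulVec (A : Matrix (Fin d) (Fin d) ℝ) (t x : Fin d → ℝ) :
    expv t (A *ᵥ x) = expv (Aᵀ *ᵥ t) x := by
  rw [expv_eq_exp_dotProduct, expv_eq_exp_dotProduct, dotProduct_mulVec, mulVec_transpose]

theorem chiB_neg (B : Finset (Fin d → ℤ)) (x : Fin d → ℝ) : chiB B (-x) = conj (chiB B x) := by
  simp only [chiB, map_mul, map_inv₀, map_natCast, map_sum, expv_neg_right]

end Exponentials

section DigitSystem

variable {d : ℕ} {R : Matrix (Fin d) (Fin d) ℤ}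

theorem Expansive.isUnit_det (hR : Expansive R) : IsUnit (Rmat R).det := by
  have hC : (R.map (Int.cast : ℤ → ℂ)).det ≠ 0 := by
    intro h0
    have hroot : (R.map (Int.cast : ℤ → ℂ)).charpoly.IsRoot 0 := by
      have := det_eq_sign_charpoly_coeff (R.map (Int.cast : ℤ → ℂ))
      rw [h0, eq_comm, mul_eq_zero] at this
      rw [Polynomial.IsRoot, ← Polynomial.coeff_zero_eq_eval_zero]
      exact this.resolve_left (pow_ne_zero _ (by norm_num))
    exact absurd (hR 0 hroot) (by norm_num)
  have hZ : R.det ≠ 0 := by exact_mod_cast (Int.cast_det (R := ℂ) R).trans_ne hC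
  rw [isUnit_iff_ne_zero, Rmat, ← Int.cast_det]
  exact_mod_cast hZ

theorem mulVec_tauB (hR : IsUnit (Rmat R).det) (b : Fin d → ℤ) (x : Fin d → ℝ) :
    Rmat R *ᵥ tauB R b x = x + vecR b := by
  rw [tauB, mulVec_mulVec, mul_nonsing_inv _ hR, one_mulVec]

theorem measurable_tauB (b : Fin d → ℤ) : Measurable (tauB R b) :=
  (continuous_const.matrix_mulVec (continuous_id.add continuous_const)).measurable

end DigitSystem

theorem inner_apply_ae_eq_expv_mul {d : ℕ} {μ : Measure (Fin d → ℝ)} {e : Lp ℂ 2 μ}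
    {t : Fin d → ℝ} (he : (e : (Fin d → ℝ) → ℂ) =ᵐ[μ] expv t) (f : Lp ℂ 2 μ) :
    (fun x => inner ℂ (e x) (f x)) =ᵐ[μ] fun x => expv (-t) x * f x := by
  filter_upwards [he] with x hx
  rw [RCLike.inner_apply', hx, expv_neg_left]

section Transfer

variable {d : ℕ} {R : Matrix (Fin d) (Fin d) ℤ} {B : Finset (Fin d → ℤ)}
  {μ : Measure (Fin d → ℝ)} {X : Set (Fin d → ℝ)} {𝓡 : (Fin d → ℝ) → (Fin d → ℝ)}

theorem ae_comp_tauB_eq (hR : IsUnit (Rmat R).det) (hμ : IsIFSInvariant μ B (tauB R))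
    (hX : μ Xᶜ = 0)
    (h𝓡 : ∀ b ∈ B, ∀ᵐ x ∂(μ.restrict (tauB R b '' X)), 𝓡 x = Rmat R *ᵥ x - vecR b)
    {b : Fin d → ℤ} (hb : b ∈ B) : ∀ᵐ x ∂μ, 𝓡 (tauB R b x) = x := by
  filter_upwards [ae_iff.mpr hX, hμ.ae_comp hb (measurable_tauB b)
    (ae_imp_of_ae_restrict (h𝓡 b hb))] with x hxX hx
  rw [hx ⟨x, hxX, rfl⟩, mulVec_tauB hR, add_sub_cancel_right]

theorem integral_expv_mul_comp (hR : IsUnit (Rmat R).det) (hμ : IsIFSInvariant μ B (tauB R))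
    (hX : μ Xᶜ = 0)
    (h𝓡 : ∀ b ∈ B, ∀ᵐ x ∂(μ.restrict (tauB R b '' X)), 𝓡 x = Rmat R *ᵥ x - vecR b)
    (u : Fin d → ℝ) {g : (Fin d → ℝ) → ℂ} (hg : Integrable (fun x => expv u x * g (𝓡 x)) μ) :
    ∫ x, expv u x * g (𝓡 x) ∂μ =
      chiB B ((Rmat R)ᵀ⁻¹ *ᵥ u) * ∫ x, expv ((Rmat R)ᵀ⁻¹ *ᵥ u) x * g x ∂μ := by
  set v := (Rmat R)ᵀ⁻¹ *ᵥ u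
  have hterm : ∀ b ∈ B, ∫ x, expv u (tauB R b x) * g (𝓡 (tauB R b x)) ∂μ =
      expv (vecR b) v * ∫ x, expv v x * g x ∂μ := by
    intro b hb
    rw [← integral_const_mul]
    refine integral_congr_ae ?_
    filter_upwards [ae_comp_tauB_eq hR hμ hX h𝓡 hb] with x hx
    rw [hx, tauB, expv_mulVec, transpose_nonsing_inv, expv_add_right, expv_comm v (vecR b)]
    ring
  rw [hμ.integral_eq (fun b _ => measurable_tauB b) hg, Finset.sum_congr rfl hterm,
    ← Finset.sum_mul, chiB, real_smul, ofReal_inv, ofReal_natCast, mul_assoc]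

theorem adjoint_apply_expv (hR : IsUnit (Rmat R).det) (hμ : IsIFSInvariant μ B (tauB R))
    (hX : μ Xᶜ = 0)
    (h𝓡 : ∀ b ∈ B, ∀ᵐ x ∂(μ.restrict (tauB R b '' X)), 𝓡 x = Rmat R *ᵥ x - vecR b)
    {l : Fin d → ℤ} {S : Lp ℂ 2 μ →L[ℂ] Lp ℂ 2 μ}
    (hS : ∀ f : Lp ℂ 2 μ, (S f : (Fin d → ℝ) → ℂ) =ᵐ[μ] fun x => expv (vecR l) x * f (𝓡 x))
    {E : (Fin d → ℝ) → Lp ℂ 2 μ} (hE : ∀ t, (E t : (Fin d → ℝ) → ℂ) =ᵐ[μ] expv t)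
    (t : Fin d → ℝ) :
    ContinuousLinearMap.adjoint S (E t) = chiB B (-(tauL R l (-t))) • E (-(tauL R l (-t))) := by
  refine ext_inner_right ℂ fun f => ?_
  have hfreq : (fun x => inner ℂ (E t x) (S f x)) =ᵐ[μ]
      fun x => expv (-t + vecR l) x * f (𝓡 x) := by
    filter_upwards [inner_apply_ae_eq_expv_mul (hE t) (S f), hS f] with x hx hSx
    rw [hx, hSx, expv_add_left, mul_assoc]
  rw [ContinuousLinearMap.adjoint_inner_left, inner_smul_left, chiB_neg, conj_conj, L2.inner_def,
    integral_congr_ae hfreq, integral_expv_mul_comp hR hμ hX h𝓡 _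
      ((L2.integrable_inner (E t) (S f)).congr hfreq), L2.inner_def,
    integral_congr_ae (inner_apply_ae_eq_expv_mul (hE _) f), neg_neg]
  rfl

end Transfer

theorem stmt3_general
    (d N : ℕ) (R : Matrix (Fin d) (Fin d) ℤ) (hRexp : Expansive R)
    (B : Finset (Fin d → ℤ)) (hBcard : B.card = N)
    (X : Set (Fin d → ℝ))
    (μ : Measure (Fin d → ℝ))
    (hμinv : μ = (N : ENNReal)⁻¹ • ∑ b ∈ B, μ.map (tauB R b))
    (hμsupp : μ Xᶜ = 0)
    (𝓡 : (Fin d → ℝ) → (Fin d → ℝ))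
    (h𝓡 : ∀ b ∈ B, ∀ᵐ x ∂(μ.restrict (tauB R b '' X)),
      𝓡 x = (Rmat R).mulVec x - vecR b)
    (L : Finset (Fin d → ℤ))
    (S : (Fin d → ℤ) → (Lp ℂ 2 μ →L[ℂ] Lp ℂ 2 μ))
    (hS : ∀ l ∈ L, ∀ f : Lp ℂ 2 μ,
      (S l f : (Fin d → ℝ) → ℂ) =ᵐ[μ] fun x => expv (vecR l) x * f (𝓡 x))
    (E : (Fin d → ℝ) → Lp ℂ 2 μ)
    (hE : ∀ t : Fin d → ℝ, (E t : (Fin d → ℝ) → ℂ) =ᵐ[μ] fun x => expv t x) :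
    (∀ l ∈ L, ∀ t : Fin d → ℝ,
      ContinuousLinearMap.adjoint (S l) (E t) =
        chiB B (-(tauL R l (-t))) • E (-(tauL R l (-t)))) ∧
    (∀ H : Submodule ℂ (Lp ℂ 2 μ), IsClosed (H : Set (Lp ℂ 2 μ)) →
      (∀ l ∈ L, ∀ f ∈ H, S l f ∈ H ∧ ContinuousLinearMap.adjoint (S l) f ∈ H) →
      ∀ t : Fin d → ℝ, E t ∈ H →
      ∀ l ∈ L, chiB B (-(tauL R l (-t))) ≠ 0 → E (-(tauL R l (-t))) ∈ H) := by
  subst hBcard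
  have hadj : ∀ l ∈ L, ∀ t : Fin d → ℝ, ContinuousLinearMap.adjoint (S l) (E t) =
      chiB B (-(tauL R l (-t))) • E (-(tauL R l (-t))) := fun l hl =>
    adjoint_apply_expv hRexp.isUnit_det hμinv hμsupp h𝓡 (hS l hl) hE
  refine ⟨hadj, fun H _ hred t ht l hl hχ => ?_⟩
  have hmem := H.smul_mem (chiB B (-(tauL R l (-t))))⁻¹ (hred l hl (E t) ht).2
  rwa [hadj l hl t, smul_smul, inv_mul_cancel₀ hχ, one_smul] at hmem

theorem stmt3
    (d N : ℕ) (R : Matrix (Fin d) (Fin d) ℤ) (hRexp : Expansive R)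
    (B : Finset (Fin d → ℤ)) (hB0 : (0 : Fin d → ℤ) ∈ B) (hBcard : B.card = N)
    (X : Set (Fin d → ℝ)) (hXc : IsCompact X) (hXne : X.Nonempty)
    (hX : X = ⋃ b ∈ B, tauB R b '' X)
    (μ : Measure (Fin d → ℝ)) [IsProbabilityMeasure μ]
    (hμinv : μ = (N : ENNReal)⁻¹ • ∑ b ∈ B, μ.map (tauB R b))
    (hμsupp : μ Xᶜ = 0)
    (hnooverlap : ∀ b ∈ B, ∀ b' ∈ B, b ≠ b' →
      μ (tauB R b '' X ∩ tauB R b' '' X) = 0)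
    (𝓡 : (Fin d → ℝ) → (Fin d → ℝ)) (h𝓡meas : Measurable 𝓡)
    (h𝓡 : ∀ b ∈ B, ∀ᵐ x ∂(μ.restrict (tauB R b '' X)),
      𝓡 x = (Rmat R).mulVec x - vecR b)
    (L : Finset (Fin d → ℤ)) (hL0 : (0 : Fin d → ℤ) ∈ L) (hLcard : L.card = N)
    (S : (Fin d → ℤ) → (Lp ℂ 2 μ →L[ℂ] Lp ℂ 2 μ))
    (hS : ∀ l ∈ L, ∀ f : Lp ℂ 2 μ,
      (S l f : (Fin d → ℝ) → ℂ) =ᵐ[μ] fun x => expv (vecR l) x * f (𝓡 x))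
    (E : (Fin d → ℝ) → Lp ℂ 2 μ)
    (hE : ∀ t : Fin d → ℝ, (E t : (Fin d → ℝ) → ℂ) =ᵐ[μ] fun x => expv t x) :
    (∀ l ∈ L, ∀ t : Fin d → ℝ,
      ContinuousLinearMap.adjoint (S l) (E t) =
        chiB B (-(tauL R l (-t))) • E (-(tauL R l (-t)))) ∧
    (∀ H : Submodule ℂ (Lp ℂ 2 μ), IsClosed (H : Set (Lp ℂ 2 μ)) →
      (∀ l ∈ L, ∀ f ∈ H, S l f ∈ H ∧ ContinuousLinearMap.adjoint (S l) f ∈ H) →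
      ∀ t : Fin d → ℝ, E t ∈ H →
      ∀ l ∈ L, chiB B (-(tauL R l (-t))) ≠ 0 → E (-(tauL R l (-t))) ∈ H) :=
  stmt3_general d N R hRexp B hBcard X μ hμinv hμsupp 𝓡 h𝓡 L S hS E hE
end
end

section
/- Let w be a minimal word over L of length p. Then: (i) the operators ρ_w(S_l), l ∈ L, satisfy the Cuntz relations ρ_w(S_l)* ρ_w(S_{l'}) = δ_{l,l'} I and Σ_{l∈L} ρ_w(S_l) ρ_w(S_l)* = I, and this representation is irreducible, i.e., every bounded operator on ℓ²(Γ(w)) commuting with all ρ_w(S_l) and all ρ_w(S_l)* is a scalar multiple of the identity; (ii) the subspace K_w spanned by {δ_{w̄}, δ_{σ(w̄)}, …, δ_{σ^{p−1}(w̄)}} satisfies ρ_w(S_l)* K_w ⊂ K_w for all l ∈ L, and K_w is cyclic: the smallest closed subspace of ℓ²(Γ(w)) containing K_w and invariant under all ρ_w(S_l) is ℓ²(Γ(w)) itself. -/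
open Complex Filter Topology
open scoped Classical

noncomputable section

/-- The infinite word `w̄ = www…` obtained by repeating `w`. -/
def periodicWord {A : Type*} (w : List A) (hw : w ≠ []) : ℕ → A :=
  fun n => w.get ⟨n % w.length, Nat.mod_lt _ (List.length_pos_iff.mpr hw)⟩

/-- Concatenation of a letter with an infinite word. -/
def consWord {A : Type*} (l : A) (ω : ℕ → A) : ℕ → A :=
  fun n => if n = 0 then l else ω (n - 1)

/-- Concatenation of a finite word with an infinite word. -/
def appendWord {A : Type*} (u : List A) (ω : ℕ → A) : ℕ → A :=
  fun n => if h : n < u.length then u.get ⟨n, h⟩ else ω (n - u.length)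

/-- `Γ(w)`: infinite words ending in an infinite repetition of `w`. -/
def GammaW {A : Type*} (w : List A) (hw : w ≠ []) : Set (ℕ → A) :=
  {ω | ∃ u : List A, ω = appendWord u (periodicWord w hw)}

/-- A word is minimal if it is not a power `u^p`, `p ≥ 2`, of a shorter word. -/
def MinimalWord {A : Type*} (w : List A) : Prop :=
  w ≠ [] ∧ ∀ (u : List A) (p : ℕ), 2 ≤ p → w ≠ (List.replicate p u).flatten

/-!
`ρ_l` sends the basis vector `δ_ω` to `δ_{lω}`, so `ρ_l*` sends `δ_ω` to `δ_{σ ω}` when `ω`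
begins with `l` and to `0` otherwise; both Cuntz relations can be checked on the basis.

If `T` commutes with every `ρ_l`, its matrix entries satisfy
`⟪δ_{lω}, T δ_{lω'}⟫ = ⟪δ_ω, T δ_{ω'}⟫` (as `ρ_l* ρ_l = 1`) and vanish when `ω` and `ω'` begin
with different letters (apply `ρ_l*` to `δ_ω`). Stripping a common prefix shows that `T` is
diagonal, and since every point of `Γ(w)` is `u w̄`, all diagonal entries equal
`⟪δ_{w̄}, T δ_{w̄}⟫`. The same induction on `u` shows that `δ_{u w̄}` lies in every
`ρ`-invariant subspace containing `δ_{w̄}`, which gives cyclicity. Finally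
`σ (σ^j w̄) = σ^{(j + 1) mod p} w̄`, so `ρ_l*` maps `K_w` into itself.
-/

open scoped lp InnerProductSpace

namespace lp

variable {ι 𝕜 : Type*} [RCLike 𝕜] [DecidableEq ι]

theorem inner_single_one_left (i : ι) (f : ℓ²(ι, 𝕜)) :
    ⟪lp.single 2 i (1 : 𝕜), f⟫_𝕜 = f i := by
  simp [lp.inner_single_left]

theorem inner_single_one_single_one (i j : ι) :
    ⟪(lp.single 2 i 1 : ℓ²(ι, 𝕜)), lp.single 2 j 1⟫_𝕜 = if i = j then 1 else 0 := by
  rw [inner_single_one_left, lp.single_apply, Pi.single_apply]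

theorem ext_continuousLinearMap_single_one {F : Type*} [AddCommMonoid F] [Module 𝕜 F]
    [TopologicalSpace F] [T2Space F] {T S : ℓ²(ι, 𝕜) →L[𝕜] F}
    (h : ∀ i, T (lp.single 2 i 1) = S (lp.single 2 i 1)) : T = S := by
  refine lp.ext_continuousLinearMap ENNReal.ofNat_ne_top fun i =>
    ContinuousLinearMap.ext fun a => ?_
  have : (lp.single 2 i a : ℓ²(ι, 𝕜)) = a • lp.single 2 i 1 := by
    rw [← lp.single_smul, smul_eq_mul, mul_one]
  simp [this, h]

theorem eq_top_of_isClosed_of_single_one_mem {V : Submodule 𝕜 ℓ²(ι, 𝕜)}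
    (hV : IsClosed (V : Set ℓ²(ι, 𝕜))) (h : ∀ i, (lp.single 2 i 1 : ℓ²(ι, 𝕜)) ∈ V) : V = ⊤ := by
  rw [eq_top_iff]
  rintro f -
  refine hV.mem_of_tendsto (lp.hasSum_single ENNReal.ofNat_ne_top f)
    (Eventually.of_forall fun s => V.sum_mem fun i _ => ?_)
  simpa [← lp.single_smul] using V.smul_mem (f i) (h i)

end lp

section Words

variable {A : Type*}

@[simp]
theorem consWord_zero (l : A) (ω : ℕ → A) : consWord l ω 0 = l := rfl

@[simp]
theorem consWord_succ (l : A) (ω : ℕ → A) (n : ℕ) : consWord l ω (n + 1) = ω n := by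
  simp [consWord]

theorem consWord_head_tail (ω : ℕ → A) : consWord (ω 0) (fun n => ω (n + 1)) = ω := by
  funext n
  cases n <;> simp

@[simp]
theorem appendWord_nil (P : ℕ → A) : appendWord [] P = P := by
  funext n
  simp [appendWord]

theorem appendWord_cons (l : A) (u : List A) (P : ℕ → A) :
    appendWord (l :: u) P = consWord l (appendWord u P) := by
  funext n
  cases n with
  | zero => simp [appendWord]
  | succ n => simp [appendWord, Nat.add_sub_add_right]

theorem tail_appendWord {u : List A} (hu : u ≠ []) (P : ℕ → A) :
    (fun n => appendWord u P (n + 1)) = appendWord u.tail P := by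
  obtain ⟨l, u, rfl⟩ := List.exists_cons_of_ne_nil hu
  simp [appendWord_cons]

theorem appendWord_periodicWord (w : List A) (hw : w ≠ []) :
    appendWord w (periodicWord w hw) = periodicWord w hw := by
  funext n
  simp only [appendWord, periodicWord]
  split_ifs with hn
  · simp [Nat.mod_eq_of_lt hn]
  · simp [Nat.mod_eq_sub_mod (not_lt.mp hn)]

theorem periodicWord_add_mod_length (w : List A) (hw : w ≠ []) (n j : ℕ) :
    periodicWord w hw (n + j % w.length) = periodicWord w hw (n + j) := by
  simp [periodicWord]

end Words

namespace GammaW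

variable {A : Type*} {w : List A} {hw : w ≠ []}

theorem consWord_mem (l : A) {ω : ℕ → A} (hω : ω ∈ GammaW w hw) :
    consWord l ω ∈ GammaW w hw := by
  obtain ⟨u, rfl⟩ := hω
  exact ⟨l :: u, (appendWord_cons l u _).symm⟩

theorem tail_mem {ω : ℕ → A} (hω : ω ∈ GammaW w hw) : (fun n => ω (n + 1)) ∈ GammaW w hw := by
  obtain ⟨u, rfl⟩ := hω
  by_cases hu : u = []
  · subst hu
    rw [appendWord_nil, ← appendWord_periodicWord w hw]
    exact ⟨w.tail, tail_appendWord hw _⟩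
  · exact ⟨u.tail, tail_appendWord hu _⟩

variable (w hw) in
def periodic : GammaW w hw := ⟨periodicWord w hw, [], (appendWord_nil _).symm⟩

def cons (l : A) (ω : GammaW w hw) : GammaW w hw := ⟨consWord l ω, consWord_mem l ω.2⟩

def tail (ω : GammaW w hw) : GammaW w hw := ⟨fun n => (ω : ℕ → A) (n + 1), tail_mem ω.2⟩

@[simp]
theorem cons_apply_zero (l : A) (ω : GammaW w hw) : (cons l ω : ℕ → A) 0 = l := rfl

@[simp]
theorem tail_cons (l : A) (ω : GammaW w hw) : tail (cons l ω) = ω :=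
  Subtype.ext (funext fun n => consWord_succ l ω n)

theorem cons_head_tail (ω : GammaW w hw) : cons ((ω : ℕ → A) 0) (tail ω) = ω :=
  Subtype.ext (consWord_head_tail (ω : ℕ → A))

theorem cons_eq_iff {l : A} {ω ω' : GammaW w hw} :
    cons l ω = ω' ↔ (ω' : ℕ → A) 0 = l ∧ ω = tail ω' := by
  constructor
  · rintro rfl
    simp
  · rintro ⟨rfl, rfl⟩
    exact cons_head_tail ω'

@[elab_as_elim]
theorem induction_on {P : GammaW w hw → Prop} (ω : GammaW w hw) (periodic : P (periodic w hw))
    (cons : ∀ l ω, P ω → P (cons l ω)) : P ω := by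
  obtain ⟨ω, u, rfl⟩ := ω
  induction u with
  | nil => simpa [GammaW.periodic] using periodic
  | cons l u ih => simpa [GammaW.cons, appendWord_cons] using cons l _ ih

theorem tail_periodic_shift {j : ℕ} {ω : GammaW w hw}
    (hω : (ω : ℕ → A) = fun n => periodicWord w hw (n + j)) :
    (tail ω : ℕ → A) = fun n => periodicWord w hw (n + (j + 1) % w.length) := by
  funext n
  simp [tail, hω, periodicWord_add_mod_length, Nat.add_right_comm, Nat.add_assoc]

section Representation

open ContinuousLinearMap

variable {ρ : A → ℓ²(GammaW w hw, ℂ) →L[ℂ] ℓ²(GammaW w hw, ℂ)}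
  (hρ : ∀ l ω, ρ l (lp.single 2 ω 1) = lp.single 2 (cons l ω) 1)
include hρ

theorem adjoint_apply_single (l : A) (ω : GammaW w hw) :
    adjoint (ρ l) (lp.single 2 ω 1) =
      if (ω : ℕ → A) 0 = l then lp.single 2 (tail ω) 1 else 0 := by
  refine lp.ext (funext fun ω' => ?_)
  rw [← lp.inner_single_one_left, adjoint_inner_right, hρ, lp.inner_single_one_single_one]
  by_cases h : (ω : ℕ → A) 0 = l <;> simp [cons_eq_iff, h, lp.single_apply, Pi.single_apply]

theorem adjoint_comp_eq [DecidableEq A] (l l' : A) :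
    (adjoint (ρ l)).comp (ρ l') = if l = l' then 1 else 0 := by
  refine lp.ext_continuousLinearMap_single_one fun ω => ?_
  rw [comp_apply, hρ, adjoint_apply_single hρ, cons_apply_zero, tail_cons]
  by_cases h : l = l'
  · simp [h]
  · simp [h, Ne.symm h]

theorem sum_comp_adjoint_eq_one [Fintype A] : ∑ l, (ρ l).comp (adjoint (ρ l)) = 1 := by
  refine lp.ext_continuousLinearMap_single_one fun ω => ?_
  have h (l : A) : (ρ l).comp (adjoint (ρ l)) (lp.single 2 ω 1) =
      if (ω : ℕ → A) 0 = l then lp.single 2 ω 1 else 0 := by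
    rw [comp_apply, adjoint_apply_single hρ]
    split_ifs with h
    · rw [hρ, ← h, cons_head_tail]
    · exact map_zero _
  simp [sum_apply, h]

section Commutant

variable {T : ℓ²(GammaW w hw, ℂ) →L[ℂ] ℓ²(GammaW w hw, ℂ)}
  (hT : ∀ l, T.comp (ρ l) = (ρ l).comp T)
include hT

theorem inner_single_cons_apply_single_cons (l : A) (ω ω' : GammaW w hw) :
    ⟪lp.single 2 (cons l ω) 1, T (lp.single 2 (cons l ω') 1)⟫_ℂ =
      ⟪lp.single 2 ω 1, T (lp.single 2 ω' 1)⟫_ℂ := by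
  rw [← hρ, ← hρ, ← comp_apply T, hT, comp_apply, ← adjoint_inner_right, ← comp_apply,
    adjoint_comp_eq hρ, if_pos rfl, one_apply_eq_self]

theorem inner_single_apply_single_cons_of_ne {l : A} {ω : GammaW w hw}
    (h : (ω : ℕ → A) 0 ≠ l) (ω' : GammaW w hw) :
    ⟪lp.single 2 ω 1, T (lp.single 2 (cons l ω') 1)⟫_ℂ = 0 := by
  rw [← hρ, ← comp_apply T, hT, comp_apply, ← adjoint_inner_left, adjoint_apply_single hρ,
    if_neg h, inner_zero_left]

theorem inner_single_apply_single_of_ne {ω ω' : GammaW w hw} (h : ω ≠ ω') :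
    ⟪lp.single 2 ω 1, T (lp.single 2 ω' 1)⟫_ℂ = 0 := by
  obtain ⟨n, hn⟩ := Function.ne_iff.mp (Subtype.coe_ne_coe.mpr h)
  induction n generalizing ω ω' with
  | zero =>
    rw [← cons_head_tail ω']
    exact inner_single_apply_single_cons_of_ne hρ hT hn _
  | succ n ih =>
    by_cases h0 : (ω : ℕ → A) 0 = (ω' : ℕ → A) 0
    · rw [← cons_head_tail ω, ← cons_head_tail ω', h0,
        inner_single_cons_apply_single_cons hρ hT]
      exact ih (fun h' => hn (congrFun (congrArg Subtype.val h') n)) hn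
    · rw [← cons_head_tail ω']
      exact inner_single_apply_single_cons_of_ne hρ hT h0 _

theorem inner_single_apply_single_self (ω : GammaW w hw) :
    ⟪lp.single 2 ω 1, T (lp.single 2 ω 1)⟫_ℂ =
      ⟪lp.single 2 (periodic w hw) 1, T (lp.single 2 (periodic w hw) 1)⟫_ℂ := by
  induction ω using induction_on with
  | periodic => rfl
  | cons l ω ih => rw [inner_single_cons_apply_single_cons hρ hT, ih]

theorem exists_eq_smul_one_of_commute : ∃ c : ℂ, T = c • 1 := by
  refine ⟨⟪lp.single 2 (periodic w hw) 1, T (lp.single 2 (periodic w hw) 1)⟫_ℂ,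
    lp.ext_continuousLinearMap_single_one fun ω' => lp.ext (funext fun ω => ?_)⟩
  rw [← lp.inner_single_one_left, ← lp.inner_single_one_left, smul_apply,
    one_apply_eq_self, inner_smul_right, lp.inner_single_one_single_one]
  split_ifs with h
  · rw [h, mul_one, inner_single_apply_single_self hρ hT]
  · rw [mul_zero, inner_single_apply_single_of_ne hρ hT h]

end Commutant

theorem adjoint_apply_mem_span_single {s : Set (GammaW w hw)}
    (hs : ∀ ω ∈ s, tail ω ∈ s) (l : A) {x : ℓ²(GammaW w hw, ℂ)}
    (hx : x ∈ Submodule.span ℂ {x | ∃ ω, ω ∈ s ∧ x = lp.single 2 ω 1}) :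
    adjoint (ρ l) x ∈ Submodule.span ℂ {x | ∃ ω, ω ∈ s ∧ x = lp.single 2 ω 1} := by
  refine Submodule.mem_comap.mp
    ((Submodule.span_le (p := Submodule.comap (adjoint (ρ l)).toLinearMap _)).mpr ?_ hx)
  rintro _ ⟨ω, hω, rfl⟩
  simp only [SetLike.mem_coe, Submodule.mem_comap, coe_coe, adjoint_apply_single hρ]
  split_ifs
  · exact Submodule.subset_span ⟨_, hs ω hω, rfl⟩
  · exact zero_mem _

theorem single_mem_of_forall_apply_mem {V : Submodule ℂ ℓ²(GammaW w hw, ℂ)}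
    (hV : ∀ l, ∀ x ∈ V, ρ l x ∈ V) (hperiodic : lp.single 2 (periodic w hw) 1 ∈ V)
    (ω : GammaW w hw) : lp.single 2 ω 1 ∈ V := by
  induction ω using induction_on with
  | periodic => exact hperiodic
  | cons l ω ih => simpa [hρ] using hV l _ ih

end Representation

end GammaW

theorem stmt8_general {A : Type*} [Fintype A] [DecidableEq A]
    (w : List A) (hw : w ≠ [])
    (ρ : A → (lp (fun _ : GammaW w hw => ℂ) 2 →L[ℂ] lp (fun _ : GammaW w hw => ℂ) 2))
    (hρ : ∀ (l : A) (ω : GammaW w hw), ∃ h : consWord l (ω : ℕ → A) ∈ GammaW w hw,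
      ρ l (lp.single 2 ω 1) = lp.single 2 ⟨consWord l (ω : ℕ → A), h⟩ 1) :
    -- (i) Cuntz relations and irreducibility
    ((∀ l l' : A, (ContinuousLinearMap.adjoint (ρ l)).comp (ρ l') =
        if l = l' then 1 else 0) ∧
      (∑ l : A, (ρ l).comp (ContinuousLinearMap.adjoint (ρ l)) = 1) ∧
      (∀ T : lp (fun _ : GammaW w hw => ℂ) 2 →L[ℂ] lp (fun _ : GammaW w hw => ℂ) 2,
        (∀ l : A, T.comp (ρ l) = (ρ l).comp T ∧
          T.comp (ContinuousLinearMap.adjoint (ρ l)) =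
            (ContinuousLinearMap.adjoint (ρ l)).comp T) →
        ∃ c : ℂ, T = c • (1 : lp (fun _ : GammaW w hw => ℂ) 2 →L[ℂ]
          lp (fun _ : GammaW w hw => ℂ) 2))) ∧
    -- (ii) the subspace K_w spanned by the δ's at the shifts of w̄
    (∀ Kw : Submodule ℂ (lp (fun _ : GammaW w hw => ℂ) 2),
      Kw = Submodule.span ℂ {x | ∃ ω : GammaW w hw,
        (∃ j, j < w.length ∧ (ω : ℕ → A) = fun n => periodicWord w hw (n + j)) ∧
        x = lp.single 2 ω 1} →
      (∀ l : A, ∀ x ∈ Kw, ContinuousLinearMap.adjoint (ρ l) x ∈ Kw) ∧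
      (∀ V : Submodule ℂ (lp (fun _ : GammaW w hw => ℂ) 2),
        IsClosed (V : Set (lp (fun _ : GammaW w hw => ℂ) 2)) →
        Kw ≤ V → (∀ l : A, ∀ x ∈ V, ρ l x ∈ V) → V = ⊤)) := by
  have hρ' (l : A) (ω : GammaW w hw) :
      ρ l (lp.single 2 ω 1) = lp.single 2 (GammaW.cons l ω) 1 := (hρ l ω).choose_spec
  have hp : 0 < w.length := List.length_pos_iff.mpr hw
  refine ⟨⟨GammaW.adjoint_comp_eq hρ', GammaW.sum_comp_adjoint_eq_one hρ',
    fun T hT => GammaW.exists_eq_smul_one_of_commute hρ' fun l => (hT l).1⟩, ?_⟩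
  rintro Kw rfl
  refine ⟨GammaW.adjoint_apply_mem_span_single hρ' fun ω ⟨j, _, hj⟩ =>
    ⟨_, Nat.mod_lt _ hp, GammaW.tail_periodic_shift hj⟩, fun V hV hKV hρV => ?_⟩
  refine lp.eq_top_of_isClosed_of_single_one_mem hV
    (GammaW.single_mem_of_forall_apply_mem hρ' hρV ?_)
  exact hKV (Submodule.subset_span ⟨_, ⟨0, hp, rfl⟩, rfl⟩)

theorem stmt8 {A : Type*} [Fintype A] [DecidableEq A]
    (N : ℕ) (hN : Fintype.card A = N) (hN2 : 2 ≤ N)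
    (w : List A) (hw : w ≠ []) (hmin : MinimalWord w)
    (ρ : A → (lp (fun _ : GammaW w hw => ℂ) 2 →L[ℂ] lp (fun _ : GammaW w hw => ℂ) 2))
    (hρ : ∀ (l : A) (ω : GammaW w hw), ∃ h : consWord l (ω : ℕ → A) ∈ GammaW w hw,
      ρ l (lp.single 2 ω 1) = lp.single 2 ⟨consWord l (ω : ℕ → A), h⟩ 1) :
    -- (i) Cuntz relations and irreducibility
    ((∀ l l' : A, (ContinuousLinearMap.adjoint (ρ l)).comp (ρ l') =
        if l = l' then 1 else 0) ∧
      (∑ l : A, (ρ l).comp (ContinuousLinearMap.adjoint (ρ l)) = 1) ∧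
      (∀ T : lp (fun _ : GammaW w hw => ℂ) 2 →L[ℂ] lp (fun _ : GammaW w hw => ℂ) 2,
        (∀ l : A, T.comp (ρ l) = (ρ l).comp T ∧
          T.comp (ContinuousLinearMap.adjoint (ρ l)) =
            (ContinuousLinearMap.adjoint (ρ l)).comp T) →
        ∃ c : ℂ, T = c • (1 : lp (fun _ : GammaW w hw => ℂ) 2 →L[ℂ]
          lp (fun _ : GammaW w hw => ℂ) 2))) ∧
    -- (ii) the subspace K_w spanned by the δ's at the shifts of w̄
    (∀ Kw : Submodule ℂ (lp (fun _ : GammaW w hw => ℂ) 2),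
      Kw = Submodule.span ℂ {x | ∃ ω : GammaW w hw,
        (∃ j, j < w.length ∧ (ω : ℕ → A) = fun n => periodicWord w hw (n + j)) ∧
        x = lp.single 2 ω 1} →
      (∀ l : A, ∀ x ∈ Kw, ContinuousLinearMap.adjoint (ρ l) x ∈ Kw) ∧
      (∀ V : Submodule ℂ (lp (fun _ : GammaW w hw => ℂ) 2),
        IsClosed (V : Set (lp (fun _ : GammaW w hw => ℂ) 2)) →
        Kw ≤ V → (∀ l : A, ∀ x ∈ V, ρ l x ∈ V) → V = ⊤)) :=
  stmt8_general w hw ρ hρ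
end
end

section
/- Let M_1 and M_2 be L-invariant sets with dist(M_1,M_2) > 0. Then for all t_1 ∈ M_1 and t_2 ∈ M_2 there exists n ∈ ℕ such that for every word w ∈ L^n of length n, χ_B^{(n)}(τ_w t_1) · χ_B^{(n)}(τ_w t_2) = 0. -/
open Complex Filter Topology

noncomputable section

def hadMat {d : ℕ} (R : Matrix (Fin d) (Fin d) ℤ) (B L : Finset (Fin d → ℤ)) :
    Matrix B L ℂ :=
  fun b l => ((Real.sqrt (B.card) : ℝ) : ℂ)⁻¹ *
    expv ((Rmat R)⁻¹.mulVec (vecR (b : Fin d → ℤ))) (vecR (l : Fin d → ℤ))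

def IsHadamardPair {d : ℕ} (R : Matrix (Fin d) (Fin d) ℤ)
    (B L : Finset (Fin d → ℤ)) : Prop :=
  (hadMat R B L).conjTranspose * hadMat R B L = 1 ∧
    hadMat R B L * (hadMat R B L).conjTranspose = 1

def IsLCycle {d : ℕ} (R : Matrix (Fin d) (Fin d) ℤ) (L : Finset (Fin d → ℤ))
    (C : Set (Fin d → ℝ)) : Prop :=
  ∃ p : ℕ, ∃ x : Fin (p + 1) → (Fin d → ℝ), ∃ l : Fin (p + 1) → (Fin d → ℤ),
    Function.Injective x ∧ (∀ i, l i ∈ L) ∧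
    (∀ i, tauL R (l i) (x i) = x (i + 1)) ∧ C = Set.range x

def BExtreme {d : ℕ} (B : Finset (Fin d → ℤ)) (C : Set (Fin d → ℝ)) : Prop :=
  ∀ x ∈ C, ‖chiB B x‖ = 1

/-- `M` is `L`-invariant: possible transitions starting in `M` stay in `M`. -/
def LInvariant {d : ℕ} (R : Matrix (Fin d) (Fin d) ℤ) (B L : Finset (Fin d → ℤ))
    (M : Set (Fin d → ℝ)) : Prop :=
  ∀ x ∈ M, ∀ l ∈ L, chiB B (tauL R l x) ≠ 0 → tauL R l x ∈ M

/-- The orbit `O(x)`: all points reachable from `x` by finitely many possible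
transitions. -/
def orbitO {d : ℕ} (R : Matrix (Fin d) (Fin d) ℤ) (B L : Finset (Fin d → ℤ))
    (x : Fin d → ℝ) : Set (Fin d → ℝ) :=
  {y | ∃ n : ℕ, ∃ z : Fin (n + 1) → (Fin d → ℝ), z 0 = x ∧ z (Fin.last n) = y ∧
    ∀ i : Fin n, ∃ l ∈ L,
      tauL R l (z i.castSucc) = z i.succ ∧ chiB B (z i.succ) ≠ 0}

/-- A minimal (nonempty) closed `L`-invariant set. -/
def IsMinimalInv {d : ℕ} (R : Matrix (Fin d) (Fin d) ℤ) (B L : Finset (Fin d → ℤ))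
    (M : Set (Fin d → ℝ)) : Prop :=
  M.Nonempty ∧ IsClosed M ∧ LInvariant R B L M ∧
    ∀ M' ⊆ M, M'.Nonempty → IsClosed M' → LInvariant R B L M' → M' = M

/-- Two sets are separated when they are at positive `dist'`-distance. -/
def SepSets {d : ℕ} (dist' : (Fin d → ℝ) → (Fin d → ℝ) → ℝ)
    (M₁ M₂ : Set (Fin d → ℝ)) : Prop :=
  ∃ δ > 0, ∀ x ∈ M₁, ∀ y ∈ M₂, δ ≤ dist' x y

/-- `χ_B^{(n)}(x) = χ_B(x) χ_B(Rᵀ x) ⋯ χ_B((Rᵀ)^{n-1} x)`. -/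
def chiBn {d : ℕ} (R : Matrix (Fin d) (Fin d) ℤ) (B : Finset (Fin d → ℤ))
    (n : ℕ) (x : Fin d → ℝ) : ℂ :=
  ∏ k ∈ Finset.range n, chiB B (((Rmat R).transpose ^ k).mulVec x)

/-- `τ_w = τ_{l_n} ∘ ⋯ ∘ τ_{l_1}` for `w = l_1 … l_n`. -/
def tauW {d : ℕ} (R : Matrix (Fin d) (Fin d) ℤ) (w : List (Fin d → ℤ))
    (x : Fin d → ℝ) : Fin d → ℝ :=
  w.foldl (fun y l => tauL R l y) x


/-!
If the product were nonzero for a word `w` of length `n`, then `χ_B^{(n)}(τ_w t_i) ≠ 0`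
would force every intermediate point `τ_{l_1 … l_k} t_i` to be a possible transition, so by
`L`-invariance `τ_w t_i ∈ M_i`. But the `τ_l` contract by a common factor `c < 1`, so
`dist(τ_w t_1, τ_w t_2) ≤ cⁿ dist(t_1, t_2)`, which is below `dist(M_1, M_2)` for large `n`.
-/

section

variable {d : ℕ}

lemma Expansive.det_ne_zero {R : Matrix (Fin d) (Fin d) ℤ} (hR : Expansive R) : R.det ≠ 0 := by
  intro hdet
  have hroot : (R.map (Int.cast : ℤ → ℂ)).charpoly.IsRoot 0 := by
    rw [Polynomial.IsRoot, ← Polynomial.coeff_zero_eq_eval_zero]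
    have h := Matrix.det_eq_sign_charpoly_coeff (R.map (Int.cast : ℤ → ℂ))
    rw [← Int.cast_det, hdet, Int.cast_zero] at h
    exact (mul_eq_zero.mp h.symm).resolve_left (pow_ne_zero _ (neg_ne_zero.mpr one_ne_zero))
  have := hR 0 hroot
  norm_num at this

lemma Rmat_det_ne_zero {R : Matrix (Fin d) (Fin d) ℤ} (hR : Expansive R) : (Rmat R).det ≠ 0 := by
  rw [Rmat, ← Int.cast_det]
  exact_mod_cast hR.det_ne_zero

lemma expv_vecR_add_vecR (b m : Fin d → ℤ) (x : Fin d → ℝ) :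
    expv (vecR b) (x + vecR m) = expv (vecR b) x := by
  have hsum : ∑ i, vecR b i * (x + vecR m) i = ∑ i, vecR b i * x i + ((∑ i, b i * m i : ℤ) : ℝ) := by
    push_cast
    rw [← Finset.sum_add_distrib]
    exact Finset.sum_congr rfl fun i _ => by simp only [vecR, Pi.add_apply]; ring
  rw [expv, expv, hsum, Complex.ofReal_add, mul_add, Complex.exp_add, Complex.ofReal_intCast,
    mul_comm _ ((_ : ℤ) : ℂ), Complex.exp_int_mul_two_pi_mul_I, mul_one]

lemma chiB_add_vecR (B : Finset (Fin d → ℤ)) (x : Fin d → ℝ) (m : Fin d → ℤ) :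
    chiB B (x + vecR m) = chiB B x := by
  simp only [chiB, expv_vecR_add_vecR]

lemma Rmat_transpose_pow_mulVec_vecR (R : Matrix (Fin d) (Fin d) ℤ) (k : ℕ) (m : Fin d → ℤ) :
    ((Rmat R).transpose ^ k).mulVec (vecR m) = vecR ((R.transpose ^ k).mulVec m) := by
  have hmap : (Rmat R).transpose ^ k = (R.transpose ^ k).map (Int.cast : ℤ → ℝ) := by
    rw [Rmat, ← Matrix.transpose_map]
    exact (map_pow (Int.castRingHom ℝ).mapMatrix R.transpose k).symm
  funext i
  simp [hmap, Matrix.mulVec, dotProduct, vecR]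

lemma chiBn_add_vecR (R : Matrix (Fin d) (Fin d) ℤ) (B : Finset (Fin d → ℤ)) (n : ℕ)
    (x : Fin d → ℝ) (m : Fin d → ℤ) : chiBn R B n (x + vecR m) = chiBn R B n x := by
  refine Finset.prod_congr rfl fun k _ => ?_
  rw [Matrix.mulVec_add, Rmat_transpose_pow_mulVec_vecR, chiB_add_vecR]

lemma chiBn_succ (R : Matrix (Fin d) (Fin d) ℤ) (B : Finset (Fin d → ℤ)) (n : ℕ)
    (x : Fin d → ℝ) :
    chiBn R B (n + 1) x = chiB B x * chiBn R B n ((Rmat R).transpose.mulVec x) := by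
  rw [chiBn, Finset.prod_range_succ', pow_zero, Matrix.one_mulVec, mul_comm]
  congr 1
  exact Finset.prod_congr rfl fun k _ => by rw [pow_succ, ← Matrix.mulVec_mulVec]

lemma Rmat_transpose_mulVec_tauL {R : Matrix (Fin d) (Fin d) ℤ} (hR : Expansive R)
    (l : Fin d → ℤ) (x : Fin d → ℝ) : (Rmat R).transpose.mulVec (tauL R l x) = x + vecR l := by
  have hu : IsUnit (Rmat R).transpose.det := by
    rw [Matrix.det_transpose]
    exact (Rmat_det_ne_zero hR).isUnit
  rw [tauL, Matrix.mulVec_mulVec, Matrix.mul_nonsing_inv _ hu, Matrix.one_mulVec]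

lemma chiBn_succ_tauL {R : Matrix (Fin d) (Fin d) ℤ} (hR : Expansive R) (B : Finset (Fin d → ℤ))
    (n : ℕ) (l : Fin d → ℤ) (x : Fin d → ℝ) :
    chiBn R B (n + 1) (tauL R l x) = chiB B (tauL R l x) * chiBn R B n x := by
  rw [chiBn_succ, Rmat_transpose_mulVec_tauL hR, chiBn_add_vecR]

lemma tauW_append_singleton (R : Matrix (Fin d) (Fin d) ℤ) (w : List (Fin d → ℤ))
    (l : Fin d → ℤ) (x : Fin d → ℝ) : tauW R (w ++ [l]) x = tauL R l (tauW R w x) := by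
  simp [tauW]

lemma LInvariant.tauW_mem_of_chiBn_ne_zero {R : Matrix (Fin d) (Fin d) ℤ} (hR : Expansive R)
    {B L : Finset (Fin d → ℤ)} {M : Set (Fin d → ℝ)} (hM : LInvariant R B L M)
    {w : List (Fin d → ℤ)} (hw : ∀ l ∈ w, l ∈ L) {x : Fin d → ℝ} (hx : x ∈ M)
    (hne : chiBn R B w.length (tauW R w x) ≠ 0) : tauW R w x ∈ M := by
  induction w using List.reverseRecOn with
  | nil => simpa [tauW] using hx
  | append_singleton w l ih =>
    rw [List.length_append, List.length_singleton, tauW_append_singleton,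
      chiBn_succ_tauL hR] at hne
    rw [tauW_append_singleton]
    exact hM _ (ih (fun l' h => hw l' (List.mem_append_left _ h)) (right_ne_zero_of_mul hne))
      l (hw l (by simp)) (left_ne_zero_of_mul hne)

lemma dist_tauW_le {R : Matrix (Fin d) (Fin d) ℤ} {L : Finset (Fin d → ℤ)}
    {dist' : (Fin d → ℝ) → (Fin d → ℝ) → ℝ} {c : ℝ} (hc : 0 ≤ c)
    (hcontr : ∀ l ∈ L, ∀ x y, dist' (tauL R l x) (tauL R l y) ≤ c * dist' x y)
    {w : List (Fin d → ℤ)} (hw : ∀ l ∈ w, l ∈ L) (x y : Fin d → ℝ) :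
    dist' (tauW R w x) (tauW R w y) ≤ c ^ w.length * dist' x y := by
  induction w generalizing x y with
  | nil => simp [tauW]
  | cons l w ih =>
    calc dist' (tauW R w (tauL R l x)) (tauW R w (tauL R l y))
        ≤ c ^ w.length * dist' (tauL R l x) (tauL R l y) :=
          ih (fun l' h => hw l' (List.mem_cons_of_mem _ h)) _ _
      _ ≤ c ^ w.length * (c * dist' x y) :=
          mul_le_mul_of_nonneg_left (hcontr l (hw l List.mem_cons_self) x y) (pow_nonneg hc _)
      _ = c ^ (w.length + 1) * dist' x y := by ring

end

theorem stmt14_general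
    (d : ℕ) (R : Matrix (Fin d) (Fin d) ℤ) (hRexp : Expansive R)
    (B L : Finset (Fin d → ℤ))
    (dist' : (Fin d → ℝ) → (Fin d → ℝ) → ℝ)
    (hcontr : ∃ c, 0 ≤ c ∧ c < 1 ∧ ∀ l ∈ L, ∀ x y,
      dist' (tauL R l x) (tauL R l y) ≤ c * dist' x y)
    (M₁ M₂ : Set (Fin d → ℝ))
    (hM₁ : LInvariant R B L M₁) (hM₂ : LInvariant R B L M₂)
    (hsep : SepSets dist' M₁ M₂) :
    ∀ t₁ ∈ M₁, ∀ t₂ ∈ M₂, ∃ n : ℕ, ∀ w : List (Fin d → ℤ),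
      w.length = n → (∀ l ∈ w, l ∈ L) →
      chiBn R B n (tauW R w t₁) * chiBn R B n (tauW R w t₂) = 0 := by
  intro t₁ ht₁ t₂ ht₂
  obtain ⟨δ, hδ, hsepd⟩ := hsep
  obtain ⟨c, hc0, hc1, hcon⟩ := hcontr
  have hpos : 0 < dist' t₁ t₂ := hδ.trans_le (hsepd t₁ ht₁ t₂ ht₂)
  obtain ⟨n, hn⟩ : ∃ n : ℕ, c ^ n < δ / dist' t₁ t₂ := exists_pow_lt_of_lt_one (by positivity) hc1
  refine ⟨n, fun w hlen hw => ?_⟩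
  subst hlen
  by_contra hne
  have hmem₁ := hM₁.tauW_mem_of_chiBn_ne_zero hRexp hw ht₁ (left_ne_zero_of_mul hne)
  have hmem₂ := hM₂.tauW_mem_of_chiBn_ne_zero hRexp hw ht₂ (right_ne_zero_of_mul hne)
  have hfar := hsepd _ hmem₁ _ hmem₂
  have hclose := dist_tauW_le hc0 hcon hw t₁ t₂
  have hsmall : c ^ w.length * dist' t₁ t₂ < δ := (lt_div_iff₀ hpos).mp hn
  linarith

theorem stmt14
    (d N : ℕ) (R : Matrix (Fin d) (Fin d) ℤ) (hRexp : Expansive R)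
    (B L : Finset (Fin d → ℤ))
    (hB0 : (0 : Fin d → ℤ) ∈ B) (hBcard : B.card = N)
    (hL0 : (0 : Fin d → ℤ) ∈ L) (hLcard : L.card = N)
    (dist' : (Fin d → ℝ) → (Fin d → ℝ) → ℝ)
    (hd0 : ∀ x y, dist' x y = 0 ↔ x = y)
    (hdsymm : ∀ x y, dist' x y = dist' y x)
    (hdtri : ∀ x y z, dist' x z ≤ dist' x y + dist' y z)
    (hdtop : ∀ s : Set (Fin d → ℝ),
      IsOpen s ↔ ∀ x ∈ s, ∃ ε > 0, ∀ y, dist' x y < ε → y ∈ s)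
    (hcontr : ∃ c, 0 ≤ c ∧ c < 1 ∧ ∀ l ∈ L, ∀ x y,
      dist' (tauL R l x) (tauL R l y) ≤ c * dist' x y)
    (M₁ M₂ : Set (Fin d → ℝ))
    (hM₁ : LInvariant R B L M₁) (hM₂ : LInvariant R B L M₂)
    (hsep : SepSets dist' M₁ M₂) :
    ∀ t₁ ∈ M₁, ∀ t₂ ∈ M₂, ∃ n : ℕ, ∀ w : List (Fin d → ℤ),
      w.length = n → (∀ l ∈ w, l ∈ L) →
      chiBn R B n (tauW R w t₁) * chiBn R B n (tauW R w t₂) = 0 :=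
  stmt14_general d R hRexp B L dist' hcontr M₁ M₂ hM₁ hM₂ hsep
end
end
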